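/- Let R be an associative ring with involution *, let P be a prime ideal of R such that R/P has characteristic different from 2, and suppose * is of P-second kind (Z(R) ∩ S(R) is not contained in P). If d₁ and d₂ are derivations of R, then the following are equivalent: (1) the image of d₁(x)d₂(x*) − [x, x*] lies in Z(R/P) for all x ∈ R; (2) the image of d₁(x)d₂(x*) − x ∘ x* lies in Z(R/P) for all x ∈ R; (3) R/P is an integral domain. -/

import Mathlib

/-!
Pass to the prime ring `Q = R/P`, where `α = π ∘ d₁` and `β = π ∘ d₂` satisfy the Leibniz rule
along `π`, and let `m` be the commutator or the anticommutator. Polarising the hypothesis makes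
`G(x, y) = α(x)β(y*) + α(y)β(x*) - m(x, y*) - m(y, x*)` central. For a skew central `s ∉ P`,
the elements `s̄`, `α(s)`, `β(s)` are central, and replacing `y` by `s y` (twice) eliminates the
error terms `α(s) ȳ β(x*)` and `α(x) ȳ* β(s)`: hence `α(y)β(z) - m(ȳ, z̄)` is central for all
`y, z`.

For the anticommutator, `z = 1` makes `2ȳ` central. For the commutator we show that
`L(u, v) = α(u)β(v) - [ū, v̄]` vanishes: `L(x, x) = α(x)β(x)` vanishes at noncentral `x` by a
primeness argument, hence everywhere by the parallelogram law; so `L` is alternating, and then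
`[[ū, ū], v̄] = 0` expands to "`2 ū L(u, v)` is central", forcing `L(u, v) = 0`. The identity
expressing `[[ū, ȳ], v̄]` through values of `L` now shows that all commutators are central, and a
prime ring of characteristic `≠ 2` with central commutators is commutative.
-/

open Subring (center mem_center_iff)

def IsPrimeRing (Q : Type*) [Ring Q] : Prop :=
  ∀ a b : Q, (∀ v : Q, a * v * b = 0) → a = 0 ∨ b = 0

namespace IsPrimeRing

variable {Q : Type*} [Ring Q]

theorem eq_zero_of_central_mul_eq_zero (hQ : IsPrimeRing Q) {c x : Q} (hc : c ∈ center Q)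
    (hc0 : c ≠ 0) (h : c * x = 0) : x = 0 :=
  (hQ c x fun v => by rw [← mem_center_iff.mp hc v, mul_assoc, h, mul_zero]).resolve_left hc0

theorem eq_zero_of_mul_central_eq_zero (hQ : IsPrimeRing Q) {c x : Q} (hc : c ∈ center Q)
    (hc0 : c ≠ 0) (h : x * c = 0) : x = 0 :=
  (hQ x c fun v => by
    rw [mul_assoc, mem_center_iff.mp hc v, ← mul_assoc, h, zero_mul]).resolve_right hc0

theorem mem_center_of_mul_mem_center (hQ : IsPrimeRing Q) {c x : Q} (hc : c ∈ center Q)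
    (hc0 : c ≠ 0) (h : c * x ∈ center Q) : x ∈ center Q := by
  refine mem_center_iff.mpr fun g => sub_eq_zero.mp <| hQ.eq_zero_of_central_mul_eq_zero hc hc0 ?_
  calc c * (g * x - x * g) = c * g * x - c * x * g := by noncomm_ring
    _ = g * (c * x) - c * x * g := by rw [← mem_center_iff.mp hc g, mul_assoc]
    _ = 0 := by rw [mem_center_iff.mp h g, sub_self]

theorem commute_of_commutator_mem_center (hQ : IsPrimeRing Q) (h2 : (2 : Q) ≠ 0)
    (h : ∀ a b : Q, a * b - b * a ∈ center Q) (a b : Q) : a * b = b * a := by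
  set c := a * b - b * a with hc_def
  have hc : ∀ g, g * c = c * g := mem_center_iff.mp (h a b)
  -- `[a, b²] = 2 b c` is central, and commuting it with `a` gives `2 c² = 0`
  have hbc : 2 * (b * c) ∈ center Q := by
    convert h a (b * b) using 1
    rw [show a * (b * b) - b * b * a = b * c + c * b by rw [hc_def]; noncomm_ring, ← hc b, two_mul]
  have hcc : 2 * (c * c) = 0 := by
    calc 2 * (c * c) = a * (2 * (b * c)) - 2 * (b * (a * c)) := by
          rw [hc_def]; noncomm_ring
      _ = 0 := by rw [mem_center_iff.mp hbc a, mul_assoc 2, mul_assoc b, ← hc a, sub_self]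
  have hc0 : c * c = 0 := hQ.eq_zero_of_central_mul_eq_zero (ofNat_mem _ 2) h2 hcc
  have : c = 0 := (hQ c c fun v => by rw [← hc v, mul_assoc, hc0, mul_zero]).elim id id
  exact sub_eq_zero.mp this

theorem mem_center_of_scaling (hQ : IsPrimeRing Q) (h2 : (2 : Q) ≠ 0) {k : Q}
    (hk : k ∈ center Q) (hk0 : k ≠ 0) {ι : Type*} (σ : ι → ι) (H U V : ι → Q)
    (hH : ∀ y, H (σ y) = k * H y + U y) (hU : ∀ y, U (σ y) = k * U y)
    (hV : ∀ y, V (σ y) = -(k * V y)) (hE : ∀ y, 2 * k * H y + U y - V y ∈ center Q) (y : ι) :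
    H y ∈ center Q := by
  have h2k : 2 * k ∈ center Q := mul_mem (ofNat_mem _ 2) hk
  have h2k0 : 2 * k ≠ 0 := fun h => hk0 (hQ.eq_zero_of_central_mul_eq_zero (ofNat_mem _ 2) h2 h)
  have hUV : ∀ y, U y + V y ∈ center Q := fun y => hQ.mem_center_of_mul_mem_center h2k h2k0 <| by
    rw [show 2 * k * (U y + V y) = 2 * k * H (σ y) + U (σ y) - V (σ y)
        - k * (2 * k * H y + U y - V y) by rw [hH, hU, hV]; noncomm_ring]
    exact sub_mem (hE _) (mul_mem hk (hE y))
  have hUV' : U y - V y ∈ center Q := hQ.mem_center_of_mul_mem_center hk hk0 <| by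
    rw [show k * (U y - V y) = U (σ y) + V (σ y) by rw [hU, hV]; noncomm_ring]
    exact hUV _
  refine hQ.mem_center_of_mul_mem_center h2k h2k0 ?_
  rw [show 2 * k * H y = 2 * k * H y + U y - V y - (U y - V y) by noncomm_ring]
  exact sub_mem (hE y) hUV'

end IsPrimeRing

section Leibniz

variable {R Q : Type*} [Ring R] [Ring Q]

def IsLeibnizAlong (π : R →+* Q) (δ : R →+ Q) : Prop :=
  ∀ x y, δ (x * y) = δ x * π y + π x * δ y

theorem RingHom.map_mem_center_of_surjective {π : R →+* Q} (hπ : Function.Surjective π) {s : R}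
    (hs : s ∈ center R) : π s ∈ center Q :=
  mem_center_iff.mpr <| hπ.forall.mpr fun r => by rw [← map_mul, ← map_mul, mem_center_iff.mp hs]

variable {π : R →+* Q} {δ : R →+ Q}

theorem IsLeibnizAlong.map_mul (hδ : IsLeibnizAlong π δ) (x y : R) :
    δ (x * y) = δ x * π y + π x * δ y :=
  hδ x y

theorem IsLeibnizAlong.map_one (hδ : IsLeibnizAlong π δ) : δ 1 = 0 := by
  simpa using hδ 1 1

theorem IsLeibnizAlong.map_mem_center (hδ : IsLeibnizAlong π δ) (hπ : Function.Surjective π)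
    {s : R} (hs : s ∈ center R) : δ s ∈ center Q := by
  refine mem_center_iff.mpr <| hπ.forall.mpr fun r => ?_
  have h := congrArg δ (mem_center_iff.mp hs r)
  rw [hδ, hδ, mem_center_iff.mp (π.map_mem_center_of_surjective hπ hs) (δ r),
    add_comm (δ s * π r)] at h
  exact add_left_cancel h

end Leibniz

section Forms

variable (Q : Type*) [Ring Q]

def commutatorForm : Q →+ Q →+ Q := AddMonoidHom.mul - AddMonoidHom.mul.flip

def anticommutatorForm : Q →+ Q →+ Q := AddMonoidHom.mul + AddMonoidHom.mul.flip

variable {Q} {c : Q}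

@[simp]
theorem commutatorForm_apply (a b : Q) : commutatorForm Q a b = a * b - b * a := rfl

@[simp]
theorem anticommutatorForm_apply (a b : Q) : anticommutatorForm Q a b = a * b + b * a := rfl

theorem commutatorForm_mul_left (hc : c ∈ center Q) (a b : Q) :
    commutatorForm Q (c * a) b = c * commutatorForm Q a b := by
  rw [commutatorForm_apply, commutatorForm_apply, ← mul_assoc b, mem_center_iff.mp hc b]
  noncomm_ring

theorem commutatorForm_mul_right (hc : c ∈ center Q) (a b : Q) :
    commutatorForm Q a (c * b) = c * commutatorForm Q a b := by
  simp only [commutatorForm_apply, ← mul_assoc a, mem_center_iff.mp hc a]; noncomm_ring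

theorem anticommutatorForm_mul_left (hc : c ∈ center Q) (a b : Q) :
    anticommutatorForm Q (c * a) b = c * anticommutatorForm Q a b := by
  rw [anticommutatorForm_apply, anticommutatorForm_apply, ← mul_assoc b, mem_center_iff.mp hc b]
  noncomm_ring

theorem anticommutatorForm_mul_right (hc : c ∈ center Q) (a b : Q) :
    anticommutatorForm Q a (c * b) = c * anticommutatorForm Q a b := by
  simp only [anticommutatorForm_apply, ← mul_assoc a, mem_center_iff.mp hc a]; noncomm_ring

end Forms

section Involution

variable {R Q : Type*} [Ring R] [StarRing R] [Ring Q] {π : R →+* Q} {α β : R →+ Q}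

theorem mul_sub_form_mem_center_of_star (hQ : IsPrimeRing Q) (h2 : (2 : Q) ≠ 0)
    (hπ : Function.Surjective π) (hα : IsLeibnizAlong π α) (hβ : IsLeibnizAlong π β)
    (m : Q →+ Q →+ Q) (hml : ∀ c ∈ center Q, ∀ a b, m (c * a) b = c * m a b)
    (hmr : ∀ c ∈ center Q, ∀ a b, m a (c * b) = c * m a b)
    {s : R} (hs : s ∈ center R) (hss : star s = -s) (hs0 : π s ≠ 0)
    (hF : ∀ x, α x * β (star x) - m (π x) (π (star x)) ∈ center Q) (y z : R) :
    α y * β z - m (π y) (π z) ∈ center Q := by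
  set k := π s
  have hk : k ∈ center Q := π.map_mem_center_of_surjective hπ hs
  have hG : ∀ x y, α x * β (star y) + α y * β (star x)
      - m (π x) (π (star y)) - m (π y) (π (star x)) ∈ center Q := fun x y => by
    convert sub_mem (sub_mem (hF (x + y)) (hF x)) (hF y) using 1
    simp only [star_add, map_add, AddMonoidHom.add_apply]; noncomm_ring
  have hπs : ∀ y, π (s * y) = k * π y := map_mul π s
  have hαs : ∀ y, α (s * y) = α s * π y + k * α y := hα.map_mul s
  have hπstar : ∀ y, π (star (s * y)) = -(k * π (star y)) := fun y => by
    rw [star_mul, hss, mul_neg, map_neg, map_mul, ← mem_center_iff.mp hk]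
  have hβstar : ∀ y, β (star (s * y)) = -(β (star y) * k + π (star y) * β s) := fun y => by
    rw [star_mul, hss, mul_neg, map_neg, hβ.map_mul]
  -- the last goal: `2 k H y + U y - V y = G(z*, s y) + k G(z*, y)`, with `G` as in `hG`
  refine hQ.mem_center_of_scaling h2 hk hs0 (s * ·) (fun y => α y * β z - m (π y) (π z))
    (fun y => α s * π y * β z) (fun y => α (star z) * π (star y) * β s)
    (fun y => ?_) (fun y => ?_) (fun y => ?_) (fun y => ?_) y
  · simp only [hαs, hπs, hml _ hk]; noncomm_ring
  · simp only [hπs, ← mul_assoc, mem_center_iff.mp hk]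
  · rw [hπstar, mul_neg, ← mul_assoc, mem_center_iff.mp hk (α (star z))]; noncomm_ring
  · convert add_mem (hG (star z) (s * y)) (mul_mem hk (hG (star z) y)) using 1
    simp only [star_star, hβstar, hαs, hπstar, hπs, map_neg, hmr _ hk, hml _ hk]
    rw [← sub_eq_zero]
    calc _ = α (star z) * β (star y) * k - k * (α (star z) * β (star y)) := by noncomm_ring
      _ = 0 := by rw [mem_center_iff.mp hk (α (star z) * β (star y)), sub_self]

end Involution

section Lie

variable {R Q : Type*} [Ring R] [Ring Q] {π : R →+* Q} {α β : R →+ Q}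

variable (π α β) in
def lieDefect (u v : R) : Q := α u * β v - (π u * π v - π v * π u)

local notation "L" => lieDefect π α β

theorem lieDefect_add_left (u w v : R) : L (u + w) v = L u v + L w v := by
  simp only [lieDefect, map_add]; noncomm_ring

theorem lieDefect_self (u : R) : L u u = α u * β u := by
  simp only [lieDefect, sub_self, sub_zero]

theorem commutator_commutator_eq_lieDefect (hα : IsLeibnizAlong π α) (hβ : IsLeibnizAlong π β)
    (u y v : R) :
    (π u * π y - π y * π u) * π v - π v * (π u * π y - π y * π u) =
      L u (v * y) - L u v * π y - L (u * v) y + π u * L v y := by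
  simp only [lieDefect, hα.map_mul, hβ.map_mul, map_mul]; noncomm_ring

theorem mul_lieDefect_sub_lieDefect_mul (hα : IsLeibnizAlong π α) (hβ : IsLeibnizAlong π β)
    (u v : R) : π u * L v u - L u v * π u = L (u * v) u - L u (v * u) := by
  simp only [lieDefect, hα.map_mul, hβ.map_mul, map_mul]; noncomm_ring

theorem mul_mul_eq_lieDefect (hα : IsLeibnizAlong π α) (x v : R) :
    α x * π v * β x = L (x * v) x - π x * L v x := by
  simp only [lieDefect, hα.map_mul, map_mul]; noncomm_ring

theorem lieDefect_self_eq_zero_of_not_mem_center (hQ : IsPrimeRing Q)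
    (hπ : Function.Surjective π) (hα : IsLeibnizAlong π α) (hL : ∀ u v, L u v ∈ center Q)
    {x : R} (hx : π x ∉ center Q) : L x x = 0 := by
  rw [lieDefect_self]
  set p := α x
  set q := β x
  by_contra hpq
  have hp : p ≠ 0 := by rintro hp; simp [hp] at hpq
  have hq : q ≠ 0 := by rintro hq; simp [hq] at hpq
  have hpq_center : p * q ∈ center Q := by simpa only [lieDefect_self] using hL x x
  -- each `p V q` has the form `c₀ - x̄ c₁` with `c₀, c₁` central, so it commutes with `x̄`
  have hcomm : ∀ V, p * V * q * π x = π x * (p * V * q) := hπ.forall.mpr fun v => by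
    rw [mul_mul_eq_lieDefect hα, sub_mul, mul_sub, mem_center_iff.mp (hL (x * v) x), mul_assoc,
      ← mem_center_iff.mp (hL v x)]
  have h₁ : ∀ V₁, (p * V₁ * π x - π x * (p * V₁)) * p = 0 := fun V₁ =>
    (hQ _ q fun V₂ => by
      calc (p * V₁ * π x - π x * (p * V₁)) * p * V₂ * q
          = p * V₁ * (π x * (p * V₂ * q)) - π x * (p * (V₁ * p * V₂) * q) := by noncomm_ring
        _ = p * V₁ * (p * V₂ * q * π x) - p * (V₁ * p * V₂) * q * π x := by
          rw [← hcomm, ← hcomm]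
        _ = 0 := by noncomm_ring).resolve_right hq
  have h₂ : ∀ V, p * V * π x = π x * (p * V) := fun V => sub_eq_zero.mp <|
    hQ.eq_zero_of_mul_central_eq_zero hpq_center hpq (by rw [← mul_assoc, h₁, zero_mul])
  have h₃ : ∀ V T, p * T * (V * π x - π x * V) = 0 := fun V T => by
    calc p * T * (V * π x - π x * V) = p * (T * V) * π x - π x * (p * T) * V := by
          rw [← h₂]; noncomm_ring
      _ = 0 := by rw [h₂]; noncomm_ring
  exact hx <| mem_center_iff.mpr fun V =>
    sub_eq_zero.mp ((hQ p _ (h₃ V)).resolve_left hp)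

theorem lieDefect_self_eq_zero (hQ : IsPrimeRing Q) (h2 : (2 : Q) ≠ 0)
    (hπ : Function.Surjective π) (hα : IsLeibnizAlong π α) (hL : ∀ u v, L u v ∈ center Q)
    {w : R} (hw : π w ∉ center Q) (x : R) : L x x = 0 := by
  by_cases hx : π x ∈ center Q
  · have hxw : π (x + w) ∉ center Q := by rwa [map_add, add_mem_cancel_left hx]
    have hxw' : π (x - w) ∉ center Q := by
      rwa [map_sub, sub_eq_add_neg, add_mem_cancel_left hx, neg_mem_iff]
    have hpar : L (x + w) (x + w) + L (x - w) (x - w) = 2 * L x x + 2 * L w w := by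
      simp only [lieDefect_self, map_add, map_sub]; noncomm_ring
    rw [lieDefect_self_eq_zero_of_not_mem_center hQ hπ hα hL hxw,
      lieDefect_self_eq_zero_of_not_mem_center hQ hπ hα hL hxw',
      lieDefect_self_eq_zero_of_not_mem_center hQ hπ hα hL hw, add_zero, mul_zero, add_zero]
      at hpar
    exact hQ.eq_zero_of_central_mul_eq_zero (ofNat_mem _ 2) h2 hpar.symm
  · exact lieDefect_self_eq_zero_of_not_mem_center hQ hπ hα hL hx

theorem lieDefect_eq_zero (hQ : IsPrimeRing Q) (h2 : (2 : Q) ≠ 0) (hπ : Function.Surjective π)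
    (hα : IsLeibnizAlong π α) (hβ : IsLeibnizAlong π β) (hL : ∀ u v, L u v ∈ center Q)
    {w : R} (hw : π w ∉ center Q) (u v : R) : L u v = 0 := by
  have hanti : ∀ u, L v u = -L u v := fun u => by
    have h := lieDefect_self_eq_zero hQ h2 hπ hα hL hw (u + v)
    rw [show L (u + v) (u + v) = L u u + L v v + (L u v + L v u) by
        simp only [lieDefect, map_add]; noncomm_ring,
      lieDefect_self_eq_zero hQ h2 hπ hα hL hw, lieDefect_self_eq_zero hQ h2 hπ hα hL hw,
      zero_add, zero_add] at h
    exact eq_neg_of_add_eq_zero_right h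
  have hnc : ∀ u, π u ∉ center Q → L u v = 0 := fun u hu => by
    have hmem : 2 * L u v * π u ∈ center Q := by
      rw [show 2 * L u v * π u = -(π u * L v u - L u v * π u) by
          rw [hanti, mul_neg, mem_center_iff.mp (hL u v) (π u)]; noncomm_ring,
        mul_lieDefect_sub_lieDefect_mul hα hβ]
      exact neg_mem (sub_mem (hL _ _) (hL _ _))
    by_contra h0
    exact hu <| hQ.mem_center_of_mul_mem_center (mul_mem (ofNat_mem _ 2) (hL u v))
      (fun h => h0 (hQ.eq_zero_of_central_mul_eq_zero (ofNat_mem _ 2) h2 h)) hmem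
  by_cases hu : π u ∈ center Q
  · have h := lieDefect_add_left (π := π) (α := α) (β := β) u w v
    rwa [hnc _ (by rwa [map_add, add_mem_cancel_left hu]), hnc _ hw, add_zero, eq_comm] at h
  · exact hnc u hu

theorem commute_of_lieDefect_mem_center (hQ : IsPrimeRing Q) (h2 : (2 : Q) ≠ 0)
    (hπ : Function.Surjective π) (hα : IsLeibnizAlong π α) (hβ : IsLeibnizAlong π β)
    (hL : ∀ u v, L u v ∈ center Q) (a b : Q) : a * b = b * a := by
  by_contra hab
  obtain ⟨w, rfl⟩ := hπ a
  have hw : π w ∉ center Q := fun h => hab (mem_center_iff.mp h b).symm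
  refine hab (hQ.commute_of_commutator_mem_center h2 (hπ.forall₂.mpr fun u y => ?_) _ _)
  refine mem_center_iff.mpr (hπ.forall.mpr fun v => ?_)
  have h := commutator_commutator_eq_lieDefect hα hβ u y v
  simp only [lieDefect_eq_zero hQ h2 hπ hα hβ hL hw, zero_mul, mul_zero, sub_zero, add_zero] at h
  exact (sub_eq_zero.mp h).symm

end Lie

theorem commute_of_anticommutatorDefect_mem_center {R Q : Type*} [Ring R] [Ring Q] {π : R →+* Q}
    {α β : R →+ Q} (hQ : IsPrimeRing Q) (h2 : (2 : Q) ≠ 0) (hπ : Function.Surjective π)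
    (hβ : IsLeibnizAlong π β) (h : ∀ y z, α y * β z - (π y * π z + π z * π y) ∈ center Q)
    (a b : Q) : a * b = b * a := by
  obtain ⟨y, rfl⟩ := hπ a
  have hy : 2 * π y ∈ center Q := by simpa [hβ.map_one, two_mul] using neg_mem (h y 1)
  exact (mem_center_iff.mp (hQ.mem_center_of_mul_mem_center (ofNat_mem _ 2) h2 hy) b).symm

namespace TwoSidedIdeal

variable {R : Type*} [Ring R] (P : TwoSidedIdeal R)

theorem mk'_eq_zero_iff {x : R} : P.ringCon.mk' x = 0 ↔ x ∈ P := by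
  rw [← mem_ker, ker_ringCon_mk']

theorem isPrimeRing_quotient (hP : ∀ a b : R, (∀ r, a * r * b ∈ P) → a ∈ P ∨ b ∈ P) :
    IsPrimeRing P.ringCon.Quotient := by
  intro a b h
  obtain ⟨x, rfl⟩ := P.ringCon.mk'_surjective a
  obtain ⟨y, rfl⟩ := P.ringCon.mk'_surjective b
  simp only [mk'_eq_zero_iff]
  exact hP x y fun r => (P.mk'_eq_zero_iff).mp (by simpa using h (P.ringCon.mk' r))

theorem mk'_mem_center_iff {a : R} :
    P.ringCon.mk' a ∈ center P.ringCon.Quotient ↔ ∀ r, a * r - r * a ∈ P := by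
  simp only [mem_center_iff, P.ringCon.mk'_surjective.forall, ← mk'_eq_zero_iff, map_sub,
    map_mul, sub_eq_zero]
  exact forall_congr' fun r => eq_comm

theorem commutator_mem_of_commute (h : ∀ a b : P.ringCon.Quotient, a * b = b * a) (x y : R) :
    x * y - y * x ∈ P := by
  rw [← mk'_eq_zero_iff, map_sub, map_mul, map_mul, h, sub_self]

theorem mem_or_mem_of_commutator_mem (hP : ∀ a b : R, (∀ r, a * r * b ∈ P) → a ∈ P ∨ b ∈ P)
    (hc : ∀ x y : R, x * y - y * x ∈ P) {x y : R} (h : x * y ∈ P) : x ∈ P ∨ y ∈ P :=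
  hP x y fun r => by
    rw [show x * r * y = r * (x * y) + (x * r - r * x) * y by noncomm_ring]
    exact P.add_mem (P.mul_mem_left r _ h) (P.mul_mem_right _ y (hc x r))

end TwoSidedIdeal

/-- Theorem 4.
Let `R` be a ring with involution `*`, `P` a prime ideal of `R` with `char (R/P) ≠ 2`
(equivalently, since `P` is proper, `(2 : R) ∉ P`), and suppose `*` is of `P`-second kind
(`Z(R) ∩ S(R) ⊄ P`).  If `d₁, d₂` are derivations of `R`, the following are equivalent:
(1) the image of `d₁(x)d₂(x*) − [x, x*]` lies in `Z(R/P)` for all `x ∈ R`;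
(2) the image of `d₁(x)d₂(x*) − x ∘ x*` lies in `Z(R/P)` for all `x ∈ R`;
(3) `R/P` is an integral domain.
(Formalized as (1) ↔ (3) and (2) ↔ (3).) -/
theorem statement12 {R : Type*} [Ring R] [StarRing R] (P : TwoSidedIdeal R)
    (hP_proper : (1 : R) ∉ P)
    (hP_prime : ∀ a b : R, (∀ r : R, a * r * b ∈ P) → a ∈ P ∨ b ∈ P)
    (hchar : (2 : R) ∉ P)
    (hsecond : ∃ s : R, (∀ r : R, s * r = r * s) ∧ star s = -s ∧ s ∉ P)
    (d₁ d₂ : R → R)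
    (hd₁_add : ∀ x y : R, d₁ (x + y) = d₁ x + d₁ y)
    (hd₁_mul : ∀ x y : R, d₁ (x * y) = d₁ x * y + x * d₁ y)
    (hd₂_add : ∀ x y : R, d₂ (x + y) = d₂ x + d₂ y)
    (hd₂_mul : ∀ x y : R, d₂ (x * y) = d₂ x * y + x * d₂ y) :
    ((∀ x r : R,
        (d₁ x * d₂ (star x) - (x * star x - star x * x)) * r
          - r * (d₁ x * d₂ (star x) - (x * star x - star x * x)) ∈ P)
      ↔ ((1 : R) ∉ P ∧ (∀ x y : R, x * y - y * x ∈ P) ∧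
          (∀ x y : R, x * y ∈ P → x ∈ P ∨ y ∈ P)))
    ∧
    ((∀ x r : R,
        (d₁ x * d₂ (star x) - (x * star x + star x * x)) * r
          - r * (d₁ x * d₂ (star x) - (x * star x + star x * x)) ∈ P)
      ↔ ((1 : R) ∉ P ∧ (∀ x y : R, x * y - y * x ∈ P) ∧
          (∀ x y : R, x * y ∈ P → x ∈ P ∨ y ∈ P))) := by
  obtain ⟨s, hs, hss, hsP⟩ := hsecond
  set π := P.ringCon.mk'
  have hπ : Function.Surjective π := P.ringCon.mk'_surjective
  have hQ := P.isPrimeRing_quotient hP_prime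
  have h2 : (2 : P.ringCon.Quotient) ≠ 0 := by rwa [← map_ofNat π 2, Ne, P.mk'_eq_zero_iff]
  have hs0 : π s ≠ 0 := by rwa [Ne, P.mk'_eq_zero_iff]
  have hs' : s ∈ center R := mem_center_iff.mpr fun r => (hs r).symm
  set α := π.toAddMonoidHom.comp (AddMonoidHom.mk' d₁ hd₁_add)
  set β := π.toAddMonoidHom.comp (AddMonoidHom.mk' d₂ hd₂_add)
  have hα : IsLeibnizAlong π α := fun x y => by simp [α, hd₁_mul]
  have hβ : IsLeibnizAlong π β := fun x y => by simp [β, hd₂_mul]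
  have domain : (∀ a b : P.ringCon.Quotient, a * b = b * a) → (1 : R) ∉ P ∧
      (∀ x y : R, x * y - y * x ∈ P) ∧ ∀ x y : R, x * y ∈ P → x ∈ P ∨ y ∈ P := fun h =>
    have hc := P.commutator_mem_of_commute h
    ⟨hP_proper, hc, fun _ _ => P.mem_or_mem_of_commutator_mem hP_prime hc⟩
  refine ⟨⟨fun h => domain ?_, fun h x r => h.2.1 _ r⟩,
    ⟨fun h => domain ?_, fun h x r => h.2.1 _ r⟩⟩
  · exact commute_of_lieDefect_mem_center hQ h2 hπ hα hβ <|
      mul_sub_form_mem_center_of_star hQ h2 hπ hα hβ (commutatorForm _)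
        (fun _ => commutatorForm_mul_left) (fun _ => commutatorForm_mul_right) hs' hss hs0
        fun x => P.mk'_mem_center_iff.mpr (h x)
  · exact commute_of_anticommutatorDefect_mem_center hQ h2 hπ hβ <|
      mul_sub_form_mem_center_of_star hQ h2 hπ hα hβ (anticommutatorForm _)
        (fun _ => anticommutatorForm_mul_left) (fun _ => anticommutatorForm_mul_right) hs' hss hs0
        fun x => P.mk'_mem_center_iff.mpr (h x)
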